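/- arXiv:1708.03228 — 7 statements merged into one kernel-verified Lean document; each statement's English description precedes it below -/
import Mathlib

section
/- Let R, y7, y3, x60, x30, x20, x10, x41, x11, x12, x22, x01, x02 be nonnegative real numbers satisfying: (1) x41 + x11 + 2*x12 + 2*x22 + x01 + 2*x02 = 1; (2) 6*x60 + 3*x30 + 2*x20 + x10 + 4*x41 + x11 + x12 + 2*x22 ≥ 1; (3) y7 = x60 + x30 + x20 + x10 + x41 + x11 + x12 + x22; (4) y3 = x01 + x02; (5) R - x60 - x30 - x20 - x41 - x22 ≥ 1; (6) 6*R - 5*y7 ≥ 6; (7) 2*R - 2*y7 - 2*y3 ≥ 1; (8) R - x60 - x41 - x22 - x12 - x02 ≥ 1; (9) y3 ≤ 1/2; (10) 4*R - 4*y7 - 4*y3 + 4*x20 + 4*x10 ≥ 3. Then R ≥ 87/62. -/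
theorem ko_lp_case1
    (R y7 y3 x60 x30 x20 x10 x41 x11 x12 x22 x01 x02 : ℝ)
    (hR : 0 ≤ R) (hy7 : 0 ≤ y7) (hy3 : 0 ≤ y3)
    (hx60 : 0 ≤ x60) (hx30 : 0 ≤ x30) (hx20 : 0 ≤ x20) (hx10 : 0 ≤ x10)
    (hx41 : 0 ≤ x41) (hx11 : 0 ≤ x11) (hx12 : 0 ≤ x12) (hx22 : 0 ≤ x22)
    (hx01 : 0 ≤ x01) (hx02 : 0 ≤ x02)
    (h1 : x41 + x11 + 2*x12 + 2*x22 + x01 + 2*x02 = 1)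
    (h2 : 6*x60 + 3*x30 + 2*x20 + x10 + 4*x41 + x11 + x12 + 2*x22 ≥ 1)
    (h3 : y7 = x60 + x30 + x20 + x10 + x41 + x11 + x12 + x22)
    (h4 : y3 = x01 + x02)
    (h5 : R - x60 - x30 - x20 - x41 - x22 ≥ 1)
    (h6 : 6*R - 5*y7 ≥ 6)
    (h7 : 2*R - 2*y7 - 2*y3 ≥ 1)
    (h8 : R - x60 - x41 - x22 - x12 - x02 ≥ 1)
    (h9 : y3 ≤ 1/2)
    (h10 : 4*R - 4*y7 - 4*y3 + 4*x20 + 4*x10 ≥ 3) :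
    R ≥ 87/62 := by linarith
end

section
/- Let R, y7, y3, x60, x30, x20, x10, x41, x11, x12, x22, x01, x02 be nonnegative real numbers satisfying: (1) x41 + x11 + 2*x12 + 2*x22 + x01 + 2*x02 = 1; (2) 6*x60 + 3*x30 + 2*x20 + x10 + 4*x41 + x11 + x12 + 2*x22 ≥ 1; (3) y7 = x60 + x30 + x20 + x10 + x41 + x11 + x12 + x22; (4) y3 = x01 + x02; (5) R - x60 - x30 - x20 - x41 - x22 ≥ 1; (6) 6*R - 5*y7 ≥ 6; (7) 2*R - 2*y7 - 2*y3 ≥ 1; (8) R - x60 - x41 - x22 - x12 - x02 ≥ 1; (9) y3 ≥ 1/2; (10) 2*R - 2*y7 - y3 + 2*x20 + 2*x10 ≥ 2. Then R ≥ 17/12. -/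
theorem ko_lp_case2
    (R y7 y3 x60 x30 x20 x10 x41 x11 x12 x22 x01 x02 : ℝ)
    (hR : 0 ≤ R) (hy7 : 0 ≤ y7) (hy3 : 0 ≤ y3)
    (hx60 : 0 ≤ x60) (hx30 : 0 ≤ x30) (hx20 : 0 ≤ x20) (hx10 : 0 ≤ x10)
    (hx41 : 0 ≤ x41) (hx11 : 0 ≤ x11) (hx12 : 0 ≤ x12) (hx22 : 0 ≤ x22)
    (hx01 : 0 ≤ x01) (hx02 : 0 ≤ x02)
    (h1 : x41 + x11 + 2*x12 + 2*x22 + x01 + 2*x02 = 1)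
    (h2 : 6*x60 + 3*x30 + 2*x20 + x10 + 4*x41 + x11 + x12 + 2*x22 ≥ 1)
    (h3 : y7 = x60 + x30 + x20 + x10 + x41 + x11 + x12 + x22)
    (h4 : y3 = x01 + x02)
    (h5 : R - x60 - x30 - x20 - x41 - x22 ≥ 1)
    (h6 : 6*R - 5*y7 ≥ 6)
    (h7 : 2*R - 2*y7 - 2*y3 ≥ 1)
    (h8 : R - x60 - x41 - x22 - x12 - x02 ≥ 1)
    (h9 : y3 ≥ 1/2)
    (h10 : 2*R - 2*y7 - y3 + 2*x20 + 2*x10 ≥ 2) :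
    R ≥ 17/12 := by linarith
end

section
/- Let R, y4, y3, s3, ℓ3, x90, x50, x81, x41, x72, x42, x32, x63, x43, x23, x54, x44, x14, x03, x04 be nonnegative real numbers satisfying: (1) 8*s3 + 15*ℓ3 = 12; (2) y4 = x90 + x50 + x81 + x41 + x72 + x42 + x32 + x63 + x43 + x23 + x54 + x44 + x14; (3) y3 = x03 + x04; (4) x81 + x41 + 2*x72 + 2*x42 + 2*x32 + 3*x63 + 3*x43 + 3*x23 + 4*x44 + 4*x54 + 4*x14 + 3*x03 + 4*x04 ≥ ℓ3 + s3; (5) x41 + x42 + x32 + x43 + x23 + x44 + x14 + x03 + x04 = ℓ3; (6) 9*x90 + 5*x50 + 8*x81 + 4*x41 + 7*x72 + 4*x42 + 3*x32 + 6*x63 + 4*x43 + 2*x23 + 5*x54 + 4*x44 + x14 ≥ 1; (7) 9 + 36*y4 ≤ R*(9 - 4*y4); (8) y4 + y3 - x50 - x41 - x32 - x23 - x03 + s3/3 + ℓ3/3 ≤ R*(7*s3/27 + 7*ℓ3/27 + 1/9); (9) y4 + y3 - x50 + s3/3 ≤ R*(s3/3 + ℓ3/4). Then R ≥ 1.7515445.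 -/
theorem sp_math_program
    (R y4 y3 s3 l3 x90 x50 x81 x41 x72 x42 x32 x63 x43 x23 x54 x44 x14 x03 x04 : ℝ)
    (hR : 0 ≤ R) (hy4 : 0 ≤ y4) (hy3 : 0 ≤ y3) (hs3 : 0 ≤ s3) (hl3 : 0 ≤ l3)
    (hx90 : 0 ≤ x90) (hx50 : 0 ≤ x50) (hx81 : 0 ≤ x81) (hx41 : 0 ≤ x41)
    (hx72 : 0 ≤ x72) (hx42 : 0 ≤ x42) (hx32 : 0 ≤ x32) (hx63 : 0 ≤ x63)
    (hx43 : 0 ≤ x43) (hx23 : 0 ≤ x23) (hx54 : 0 ≤ x54) (hx44 : 0 ≤ x44)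
    (hx14 : 0 ≤ x14) (hx03 : 0 ≤ x03) (hx04 : 0 ≤ x04)
    (h1 : 8*s3 + 15*l3 = 12)
    (h2 : y4 = x90 + x50 + x81 + x41 + x72 + x42 + x32 + x63 + x43 + x23 + x54 + x44 + x14)
    (h3 : y3 = x03 + x04)
    (h4 : x81 + x41 + 2*x72 + 2*x42 + 2*x32 + 3*x63 + 3*x43 + 3*x23 + 4*x44 + 4*x54
            + 4*x14 + 3*x03 + 4*x04 ≥ l3 + s3)
    (h5 : x41 + x42 + x32 + x43 + x23 + x44 + x14 + x03 + x04 = l3)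
    (h6 : 9*x90 + 5*x50 + 8*x81 + 4*x41 + 7*x72 + 4*x42 + 3*x32 + 6*x63 + 4*x43
            + 2*x23 + 5*x54 + 4*x44 + x14 ≥ 1)
    (h7 : 9 + 36*y4 ≤ R*(9 - 4*y4))
    (h8 : y4 + y3 - x50 - x41 - x32 - x23 - x03 + s3/3 + l3/3
            ≤ R*(7*s3/27 + 7*l3/27 + 1/9))
    (h9 : y4 + y3 - x50 + s3/3 ≤ R*(s3/3 + l3/4)) :
    R ≥ 1.7515445 := by
  by_contra hcon
  push_neg at hcon
  have h94 : 0 < 9 - 4*y4 := by nlinarith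
  have h7c : 9 + 36*y4 < 1.7515445*(9 - 4*y4) := by
    calc 9 + 36*y4 ≤ R*(9 - 4*y4) := h7
    _ < 1.7515445*(9 - 4*y4) := by exact mul_lt_mul_of_pos_right hcon h94
  have hs8 : (0:ℝ) ≤ 7*s3/27 + 7*l3/27 + 1/9 := by linarith
  have hs9 : (0:ℝ) ≤ s3/3 + l3/4 := by linarith
  have h8c : y4 + y3 - x50 - x41 - x32 - x23 - x03 + s3/3 + l3/3
      ≤ 1.7515445*(7*s3/27 + 7*l3/27 + 1/9) := by
    calc y4 + y3 - x50 - x41 - x32 - x23 - x03 + s3/3 + l3/3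
        ≤ R*(7*s3/27 + 7*l3/27 + 1/9) := h8
    _ ≤ 1.7515445*(7*s3/27 + 7*l3/27 + 1/9) :=
        mul_le_mul_of_nonneg_right (le_of_lt hcon) hs8
  have h9c : y4 + y3 - x50 + s3/3 ≤ 1.7515445*(s3/3 + l3/4) := by
    calc y4 + y3 - x50 + s3/3 ≤ R*(s3/3 + l3/4) := h9
    _ ≤ 1.7515445*(s3/3 + l3/4) := mul_le_mul_of_nonneg_right (le_of_lt hcon) hs9
  linarith [h1, h2, h3, h4, h5, h6, h7c, h8c, h9c, hx50, hx23, hx14, hx04, hx90,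
    hx81, hx72, hx63, hx54, hx44, hx43, hx42, hx41, hx32, hx03, hy3, hy4, hs3, hl3]
end

section
/- Let t ≥ 2 and M ≥ 1 be integers, and let X, X_t be integers with 0 ≤ X_t ≤ X ≤ M, X_t ≤ M/(2t), and M - t*X_t ≤ (t-1)*(X - X_t) (i.e., the items not in full bins occupy bins with at most t-1 items each). Then X ≥ M*(2t-1)/(2t*(t-1)), and consequently (X + (M - X)/t) / (M/t) ≥ 2 - 1/(2t). -/
theorem clcbp_huge_ratio (t M X Xt : ℤ) (ht : 2 ≤ t) (hM : 1 ≤ M)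
    (hXt0 : 0 ≤ Xt) (hXtX : Xt ≤ X) (hXM : X ≤ M)
    (hXt : (Xt : ℝ) ≤ (M : ℝ)/(2*(t : ℝ)))
    (hfill : (M : ℝ) - (t : ℝ)*(Xt : ℝ) ≤ ((t : ℝ) - 1)*((X : ℝ) - (Xt : ℝ))) :
    (X : ℝ) ≥ (M : ℝ)*(2*(t : ℝ) - 1)/(2*(t : ℝ)*((t : ℝ) - 1)) ∧
    ((X : ℝ) + ((M : ℝ) - (X : ℝ))/(t : ℝ)) / ((M : ℝ)/(t : ℝ)) ≥ 2 - 1/(2*(t : ℝ)) := by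
  have htR : (2 : ℝ) ≤ (t : ℝ) := by exact_mod_cast ht
  have hMR : (1 : ℝ) ≤ (M : ℝ) := by exact_mod_cast hM
  have ht0 : (0 : ℝ) < (t : ℝ) := by linarith
  have ht1 : (0 : ℝ) < (t : ℝ) - 1 := by linarith
  have hM0 : (0 : ℝ) < (M : ℝ) := by linarith
  have hXt' : 2 * (t : ℝ) * (Xt : ℝ) ≤ (M : ℝ) := by
    rw [le_div_iff₀ (by positivity)] at hXt
    linarith
  have key : (M : ℝ) * (2*(t:ℝ) - 1) ≤ (X : ℝ) * (2*(t:ℝ)*((t:ℝ)-1)) := by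
    nlinarith
  constructor
  · rw [ge_iff_le, div_le_iff₀ (by positivity)]
    linarith
  · rw [ge_iff_le, le_div_iff₀ (by positivity)]
    have hX1 : (M : ℝ)*(2*(t:ℝ) - 1)/(2*(t:ℝ)*((t:ℝ)-1)) ≤ (X : ℝ) := by
      rw [div_le_iff₀ (by positivity)]; linarith
    field_simp
    nlinarith
end

section
/- Let R, x1, x2, z1, z2 be nonnegative real numbers satisfying: (1) x1 ≤ 2*x2; (2) x1 + x2 + 1 ≤ R; (3) x2 + z1 + 2*z2 ≤ R*(z1 + z2); (4) z2 ≤ z1; (5) x1 + 2*x2 = 1; (6) x2 ≥ x1; (7) z1 + z2 = 2*x2; (8) x2 + z1 + z2 ≤ R*(z1/2 + z2 + x2/2). Then R ≥ 1.7320507. -/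
theorem clcbp_t2_case1 (R x1 x2 z1 z2 : ℝ)
    (hR : 0 ≤ R) (hx1 : 0 ≤ x1) (hx2 : 0 ≤ x2) (hz1 : 0 ≤ z1) (hz2 : 0 ≤ z2)
    (h1 : x1 ≤ 2*x2) (h2 : x1 + x2 + 1 ≤ R)
    (h3 : x2 + z1 + 2*z2 ≤ R*(z1 + z2)) (h4 : z2 ≤ z1)
    (h5 : x1 + 2*x2 = 1) (h6 : x2 ≥ x1) (h7 : z1 + z2 = 2*x2)
    (h8 : x2 + z1 + z2 ≤ R*(z1/2 + z2 + x2/2)) :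
    R ≥ 1.7320507 := by
  have hx23 : x2 ≥ 1/3 := by linarith
  have hz2b : z2 ≤ (2*R - 3) * x2 := by nlinarith
  have hR2 : R^2 ≥ 3 := by nlinarith [mul_le_mul_of_nonneg_left hz2b hR]
  nlinarith
end

section
/- Let R, x1, x2, z1, z2 be nonnegative real numbers satisfying: (1) x1 ≤ 2*x2; (2) x1 + x2 + 1 ≤ R; (3) x2 + z1 + 2*z2 ≤ R*(z1 + z2); (4) z2 ≤ z1; (5) x1 + 2*x2 = 1; (6) x1 ≥ x2; (7) z1 + z2 = 2*x1; (8) x2 + z1 + z2 ≤ R*(z1/2 + z2 + x2 - x1/2). Then R ≥ 1.717668486. -/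
set_option maxHeartbeats 1000000


theorem clcbp_t2_case2 (R x1 x2 z1 z2 : ℝ)
    (hR : 0 ≤ R) (hx1 : 0 ≤ x1) (hx2 : 0 ≤ x2) (hz1 : 0 ≤ z1) (hz2 : 0 ≤ z2)
    (h1 : x1 ≤ 2*x2) (h2 : x1 + x2 + 1 ≤ R)
    (h3 : x2 + z1 + 2*z2 ≤ R*(z1 + z2)) (h4 : z2 ≤ z1)
    (h5 : x1 + 2*x2 = 1) (h6 : x1 ≥ x2) (h7 : z1 + z2 = 2*x1)
    (h8 : x2 + z1 + z2 ≤ R*(z1/2 + z2 + x2 - x1/2)) :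
    R ≥ 1.717668486 := by
  by_contra hlt
  push_neg at hlt
  have hx2e : x2 = (1 - x1)/2 := by linarith
  have hxlb : (1:ℝ)/3 ≤ x1 := by linarith
  have hRlb : (5:ℝ)/3 ≤ R := by linarith
  have hxub : x1 ≤ 2*R - 3 := by linarith
  have hz1e : z1 = 2*x1 - z2 := by linarith
  have h3' : R*(z1+z2) = 2*R*x1 := by rw [h7]; ring
  have hz2b : z2 ≤ 2*R*x1 - (1+3*x1)/2 := by
    rw [h3'] at h3; linarith
  have h8' : (1+3*x1)/2 ≤ R*(1/2 + z2/2) := by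
    have e : z1/2 + z2 + x2 - x1/2 = 1/2 + z2/2 := by
      rw [hz1e, hx2e]; ring
    rw [e] at h8; linarith
  have hkey : 1 + 3*x1 ≤ R*((1-3*x1)/2 + 2*R*x1) := by
    nlinarith [mul_le_mul_of_nonneg_left hz2b hR]
  have hcoef : 0 ≤ 2*R^2 - 3*R/2 - 3 := by nlinarith
  have hcubic : 0 ≤ 4*R^3 - 9*R^2 - R + 8 := by
    nlinarith [mul_le_mul_of_nonneg_left hxub hcoef]
  nlinarith [hcubic, hRlb, hlt, sq_nonneg (R - 1.7), sq_nonneg (R - 5/3)]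
end

section
/- Let R, x, x1, x2, x3, z1, z2 be nonnegative real numbers satisfying: (1) x1 + 2*x2 + 3*x3 = 1; (2) x = x1 + x2 + x3; (3) 1 + 2*x ≤ R; (4) z2 ≤ z1; (5) x3 + z1 + z2 ≤ R*(z1 + 2*z2)/2; (6) x3 + z1 + 2*z2 ≤ R*(z1 + z2); (7) z1 + z2 + 6*x3 ≤ 2; (8) 3*z1 + 4*z2 = 2. Then R ≥ 1.80814287. -/
theorem clcbp_t3_case2 (R x x1 x2 x3 z1 z2 : ℝ)
    (hR : 0 ≤ R) (hx : 0 ≤ x) (hx1 : 0 ≤ x1) (hx2 : 0 ≤ x2) (hx3 : 0 ≤ x3)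
    (hz1 : 0 ≤ z1) (hz2 : 0 ≤ z2)
    (h1 : x1 + 2*x2 + 3*x3 = 1) (h2 : x = x1 + x2 + x3)
    (h3 : 1 + 2*x ≤ R) (h4 : z2 ≤ z1)
    (h5 : x3 + z1 + z2 ≤ R*(z1 + 2*z2)/2)
    (h6 : x3 + z1 + 2*z2 ≤ R*(z1 + z2))
    (h7 : z1 + z2 + 6*x3 ≤ 2) (h8 : 3*z1 + 4*z2 = 2) :
    R ≥ 1.80814287 := by
  -- x3 ≥ 2 - R
  have hA : 2 - R ≤ x3 := by linarith
  have hz2eq : z2 = (2 - 3*z1)/4 := by linarith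
  have hRz2 : R*z2 = (2*R - 3*(R*z1))/4 := by rw [hz2eq]; ring
  -- rewrite h5: x3 + z1 + z2 ≤ R*(z1+2*z2)/2 = (R*z1 + 2*(R*z2))/2
  have h5' : x3 + z1 + (2 - 3*z1)/4 ≤ (R*z1 + 2*((2*R - 3*(R*z1))/4))/2 := by
    calc x3 + z1 + (2 - 3*z1)/4 = x3 + z1 + z2 := by rw [hz2eq]
    _ ≤ R*(z1 + 2*z2)/2 := h5
    _ = (R*z1 + 2*(R*z2))/2 := by ring
    _ = (R*z1 + 2*((2*R - 3*(R*z1))/4))/2 := by rw [hRz2]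
  have h6' : x3 + z1 + 2*((2 - 3*z1)/4) ≤ R*z1 + (2*R - 3*(R*z1))/4 := by
    calc x3 + z1 + 2*((2 - 3*z1)/4) = x3 + z1 + 2*z2 := by rw [hz2eq]
    _ ≤ R*(z1 + z2) := h6
    _ = R*z1 + R*z2 := by ring
    _ = R*z1 + (2*R - 3*(R*z1))/4 := by rw [hRz2]
  -- (R+1)*z1 ≤ 6R - 10  and  (R+2)*z1 ≥ 12 - 6R
  have hB : (R+1)*z1 ≤ 6*R - 10 := by nlinarith [h5', hA]
  have hC : 12 - 6*R ≤ (R+2)*z1 := by nlinarith [h6', hA]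
  have hP1 : (0:ℝ) ≤ R + 1 := by linarith
  have hP2 : (0:ℝ) ≤ R + 2 := by linarith
  have hM1 : (R+2)*((R+1)*z1) ≤ (R+2)*(6*R - 10) :=
    mul_le_mul_of_nonneg_left hB hP2
  have hM2 : (R+1)*(12 - 6*R) ≤ (R+1)*((R+2)*z1) :=
    mul_le_mul_of_nonneg_left hC hP1
  have hkey : 3*R^2 - R - 8 ≥ 0 := by nlinarith [hM1, hM2]
  nlinarith [hkey, hR, sq_nonneg (R - 1.80814287)]
end
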